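/- Let g be a factor over a finite variable set Y and h a factor over a finite variable set W, with X ∈ Y and X ∈ W. Then ∑_X (g · (∑_X h)) = (∑_X g) · (∑_X h) as factors over (Y ∪ W) \ {X}; that is, once X has been summed out of one multiplicand, it can be summed out of the other multiplicand independently. -/

import Mathlib

/-- An instantiation of the variables in `S`, where variable `i` has value set `V i`. -/
abbrev Inst {ι : Type*} (V : ι → Type*) (S : Finset ι) : Type _ :=
  ∀ i : S, V i

/-- Restrict an instantiation of `T` to a subset `S ⊆ T`. -/
def Inst.restrict {ι : Type*} {V : ι → Type*} {S T : Finset ι} (h : S ⊆ T)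
    (z : Inst V T) : Inst V S :=
  fun i => z ⟨i, h i.2⟩

/-- Transport an instantiation along an equality of variable sets. -/
def Inst.cast {ι : Type*} {V : ι → Type*} {S T : Finset ι} (h : S = T)
    (z : Inst V S) : Inst V T :=
  fun i => z ⟨i, h.symm ▸ i.2⟩

/-- Extend an instantiation `u` of `U` with a value `x` for the variable `X`,
yielding an instantiation of `insert X U`. -/
def Inst.consX {ι : Type*} [DecidableEq ι] {V : ι → Type*} {U : Finset ι} (X : ι)
    (x : V X) (u : Inst V U) : Inst V (insert X U) :=
  fun i => if h : (i : ι) = X then _root_.cast (congrArg V h).symm x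
           else u ⟨i, (Finset.mem_insert.mp i.2).resolve_left h⟩

/-- Extend an instantiation `w` of `W \ {X}` with a value `x` for `X ∈ W`,
yielding an instantiation of `W`. -/
def Inst.extendAt {ι : Type*} [DecidableEq ι] {V : ι → Type*} {W : Finset ι} (X : ι)
    (_hX : X ∈ W) (x : V X) (w : Inst V (W \ {X})) : Inst V W :=
  fun i => if h : (i : ι) = X then _root_.cast (congrArg V h).symm x
           else w ⟨i, Finset.mem_sdiff.mpr ⟨i.2, Finset.notMem_singleton.mpr h⟩⟩

/-- The product of a factor over `S` and a factor over `T` is a factor over `S ∪ T`. -/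
def Factor.mul {ι : Type*} [DecidableEq ι] {V : ι → Type*} {S T : Finset ι}
    (f : Inst V S → ℝ) (g : Inst V T → ℝ) : Inst V (S ∪ T) → ℝ :=
  fun z => f (fun i => z ⟨i, Finset.mem_union_left _ i.2⟩) *
           g (fun i => z ⟨i, Finset.mem_union_right _ i.2⟩)

/-- Summing out the variables `Y ⊆ S` from a factor over `S` yields a factor over `S \ Y`. -/
noncomputable def Factor.sumOut {ι : Type*} [DecidableEq ι] {V : ι → Type*}
    [∀ i, Fintype (V i)] {S : Finset ι} (Y : Finset ι) (_hY : Y ⊆ S)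
    (f : Inst V S → ℝ) : Inst V (S \ Y) → ℝ :=
  fun z => ∑ y : Inst V Y, f fun i =>
    if h : (i : ι) ∈ Y then y ⟨i, h⟩ else z ⟨i, Finset.mem_sdiff.mpr ⟨i.2, h⟩⟩

theorem Factor.sumOut_mul_of_disjoint {ι : Type*} [DecidableEq ι] {V : ι → Type*}
    [∀ i, Fintype (V i)] {S T Z : Finset ι} (hZS : Z ⊆ S) (hZT : Disjoint Z T)
    (f : Inst V S → ℝ) (k : Inst V T → ℝ) (z : Inst V ((S ∪ T) \ Z)) :
    Factor.sumOut Z (hZS.trans Finset.subset_union_left) (Factor.mul f k) z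
      = Factor.mul (Factor.sumOut Z hZS f) k
          (Inst.cast (by rw [Finset.union_sdiff_distrib,
            Finset.sdiff_eq_self_of_disjoint hZT.symm]) z) := by
  simp only [Factor.sumOut, Factor.mul, Inst.cast, Finset.sum_mul]
  refine Finset.sum_congr rfl fun y _ => congrArg _ (congrArg k (funext fun i => ?_))
  exact dif_neg (Finset.disjoint_right.mp hZT i.2)

/-- For factors `g` over `Y ∋ X` and `h` over `W ∋ X`,
`∑_X (g · (∑_X h)) = (∑_X g) · (∑_X h)` as factors over `(Y ∪ W) \ {X}`: once `X` has
been summed out of one multiplicand it can be summed out of the other independently. -/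
theorem sumOut_mul_sumOut {ι : Type*} [DecidableEq ι] (V : ι → Type*)
    [∀ i, Fintype (V i)]
    (X : ι) (Y W : Finset ι) (hXY : X ∈ Y) (hXW : X ∈ W)
    (g : Inst V Y → ℝ) (h : Inst V W → ℝ) :
    ∀ z : Inst V ((Y ∪ W) \ {X}),
      Factor.sumOut {X}
          (Finset.singleton_subset_iff.mpr (Finset.mem_union_left _ hXY))
          (Factor.mul g (Factor.sumOut {X} (Finset.singleton_subset_iff.mpr hXW) h))
          (Inst.cast
            (by
              ext a
              simp only [Finset.mem_sdiff, Finset.mem_union, Finset.mem_singleton]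
              tauto) z)
        = Factor.mul
            (Factor.sumOut {X} (Finset.singleton_subset_iff.mpr hXY) g)
            (Factor.sumOut {X} (Finset.singleton_subset_iff.mpr hXW) h)
            (Inst.cast
              (by
                ext a
                simp only [Finset.mem_sdiff, Finset.mem_union, Finset.mem_singleton]
                tauto) z) := by
  intro z
  -- `∑_X h` lives over `W \ {X}`, which misses `X`; the transports of `z` agree definitionally.
  exact Factor.sumOut_mul_of_disjoint _ Finset.disjoint_sdiff g _ _
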